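/- Let G and H be grid-labelled graphs of type (a,b), each with at least one edge, that are locally isomorphic: there exist permutations π of Fin a and σ of Fin b such that for all (i,j),(k,l) ∈ Fin a × Fin b, H has an edge between (i,j) and (k,l) if and only if G has an edge between (π i, σ j) and (π k, σ l). Then ρ(G) is separable if and only if ρ(H) is separable. -/

import Mathlib

open Matrix Kronecker ComplexOrder

/-- The partial transpose of a grid-labelled graph. -/
def PartialTranspose {a b : ℕ} (G : SimpleGraph (Fin a × Fin b)) :
    SimpleGraph (Fin a × Fin b) where
  Adj v w := G.Adj (w.1, v.2) (v.1, w.2)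
  symm := by
    constructor
    intro v w h
    exact h.symm
  loopless := by
    constructor
    intro v h
    exact h.ne rfl

instance {a b : ℕ} (G : SimpleGraph (Fin a × Fin b)) [h : DecidableRel G.Adj] :
    DecidableRel (PartialTranspose G).Adj :=
  fun v w => h (w.1, v.2) (v.1, w.2)

/-- Separability of a bipartite density matrix. -/
def MatSeparable {a b : ℕ} (ρ : Matrix (Fin a × Fin b) (Fin a × Fin b) ℂ) : Prop :=
  ∃ (n : ℕ) (A : Fin n → Matrix (Fin a) (Fin a) ℂ) (B : Fin n → Matrix (Fin b) (Fin b) ℂ),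
    (∀ i, (A i).PosSemidef) ∧ (∀ i, (B i).PosSemidef) ∧ ρ = ∑ i, (A i) ⊗ₖ (B i)

/-- The density matrix of a grid-labelled graph: `L(G)/(2m)`. -/
noncomputable def densityMatrix {a b : ℕ} (G : SimpleGraph (Fin a × Fin b))
    [DecidableRel G.Adj] : Matrix (Fin a × Fin b) (Fin a × Fin b) ℂ :=
  ((1 : ℂ) / (2 * (G.edgeFinset.card : ℂ))) • G.lapMatrix ℂ

/-- Degree criterion. -/
def DegreeCriterion {a b : ℕ} (G : SimpleGraph (Fin a × Fin b)) [DecidableRel G.Adj] : Prop :=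
  ∀ v, G.degree v = (PartialTranspose G).degree v


section Aux

lemma matSep_submatrix {a b : ℕ} (ρ : Matrix (Fin a × Fin b) (Fin a × Fin b) ℂ)
    (π : Equiv.Perm (Fin a)) (σ : Equiv.Perm (Fin b)) (h : MatSeparable ρ) :
    MatSeparable (ρ.submatrix (Prod.map π σ) (Prod.map π σ)) := by
  obtain ⟨n, A, B, hA, hB, rfl⟩ := h
  refine ⟨n, fun i => (A i).submatrix π π, fun i => (B i).submatrix σ σ,
    fun i => (hA i).submatrix π, fun i => (hB i).submatrix σ, ?_⟩
  ext v w
  simp [Matrix.submatrix_apply, Matrix.sum_apply, Matrix.kroneckerMap_apply]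

lemma sep_of_localIso {a b : ℕ} (G H : SimpleGraph (Fin a × Fin b))
    [DecidableRel G.Adj] [DecidableRel H.Adj]
    (π : Equiv.Perm (Fin a)) (σ : Equiv.Perm (Fin b))
    (hiso : ∀ v w : Fin a × Fin b, H.Adj v w ↔ G.Adj (π v.1, σ v.2) (π w.1, σ w.2))
    (h : MatSeparable (densityMatrix G)) : MatSeparable (densityMatrix H) := by
  classical
  let e : (Fin a × Fin b) ≃ (Fin a × Fin b) := π.prodCongr σ
  have he : ∀ v : Fin a × Fin b, e v = (π v.1, σ v.2) := fun v => rfl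
  have iso : H ≃g G := ⟨e, by intro v w; exact (hiso v w).symm⟩
  have hdeg : ∀ v, H.degree v = G.degree (e v) := by
    intro v
    unfold SimpleGraph.degree
    apply Finset.card_bij (fun u _ => e u)
    · intro u hu
      simp only [SimpleGraph.mem_neighborFinset] at hu ⊢
      exact (hiso v u).mp hu
    · intro u₁ _ u₂ _ h12; exact e.injective h12
    · intro u hu
      refine ⟨e.symm u, ?_, by simp⟩
      simp only [SimpleGraph.mem_neighborFinset] at hu ⊢
      rw [hiso]
      have h2 : (π (e.symm u).1, σ (e.symm u).2) = u := e.apply_symm_apply u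
      rw [h2]
      simpa [he] using hu
  have hlap : H.lapMatrix ℂ = (G.lapMatrix ℂ).submatrix e e := by
    ext v w
    simp only [SimpleGraph.lapMatrix, SimpleGraph.degMatrix, Matrix.sub_apply,
      Matrix.submatrix_apply, Matrix.diagonal_apply, SimpleGraph.adjMatrix_apply]
    congr 1
    · by_cases hvw : v = w
      · subst hvw; simp [hdeg]
      · rw [if_neg hvw, if_neg (fun h' => hvw (e.injective h'))]
    · simp only [he v, he w, hiso v w]
  have hcard : H.edgeFinset.card = G.edgeFinset.card := iso.card_edgeFinset_eq
  have hdm : densityMatrix H = (densityMatrix G).submatrix (Prod.map π σ) (Prod.map π σ) := by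
    unfold densityMatrix
    rw [hcard, hlap]
    ext v w
    simp [Matrix.submatrix_apply, e, Equiv.prodCongr]
  rw [hdm]
  exact matSep_submatrix _ π σ h

end Aux

theorem statement6 {a b : ℕ} (G H : SimpleGraph (Fin a × Fin b))
    [DecidableRel G.Adj] [DecidableRel H.Adj]
    (hG : 1 ≤ G.edgeFinset.card) (hH : 1 ≤ H.edgeFinset.card)
    (π : Equiv.Perm (Fin a)) (σ : Equiv.Perm (Fin b))
    (hiso : ∀ v w : Fin a × Fin b, H.Adj v w ↔ G.Adj (π v.1, σ v.2) (π w.1, σ w.2)) :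
    MatSeparable (densityMatrix G) ↔ MatSeparable (densityMatrix H) := by
  constructor
  · exact sep_of_localIso G H π σ hiso
  · refine sep_of_localIso H G π⁻¹ σ⁻¹ (fun v w => ?_)
    rw [hiso]
    simp
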